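/- Let V = ℂ^n, Σ ≤ GL(V) a finite group, G ≤ Σ with ℓ = [Σ:G], and 𝒮 = Σ/G the set of left cosets with its Σ-action. For each reflecting hyperplane P of Σ, with C_P the pointwise stabilizer of P, g_P a generator of C_P, and b_i(g_P) the number of orbits of size i of ⟨g_P⟩ on 𝒮, set e(G,P) = (|C_P|/2)·Σ_{i≥2} b_i(g_P)·(i−1). Then Σ_{P∈𝒫} e(G,P) = (ℓ/2)·( |ℛ(Σ)| − |ℛ(G)| ), where 𝒫 is the set of all reflecting hyperplanes, ℛ(Σ) the set of all reflections in Σ, and ℛ(G) = ℛ(Σ) ∩ G. -/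

import Mathlib

open MvPolynomial

/-- The fixed-point subspace of a linear automorphism `g` of `ℂ^n`. -/
noncomputable def fixedSubspace {n : ℕ} (g : (Fin n → ℂ) ≃ₗ[ℂ] (Fin n → ℂ)) :
    Submodule ℂ (Fin n → ℂ) where
  carrier := {v | g v = v}
  add_mem' := by
    intro a b ha hb
    simp only [Set.mem_setOf_eq] at *
    rw [map_add, ha, hb]
  zero_mem' := by simp
  smul_mem' := by
    intro c v hv
    simp only [Set.mem_setOf_eq] at *
    rw [map_smul, hv]

/-- `g` is a reflection: a nonidentity linear automorphism whose fixed-point subspace is a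
hyperplane of `ℂ^n`. -/
def IsReflection {n : ℕ} (g : (Fin n → ℂ) ≃ₗ[ℂ] (Fin n → ℂ)) : Prop :=
  g ≠ 1 ∧ Module.finrank ℂ (fixedSubspace g) = n - 1

/-- The set of reflecting hyperplanes of a group `Sg` of linear automorphisms of `ℂ^n`. -/
def reflHyperplanes {n : ℕ} (Sg : Subgroup ((Fin n → ℂ) ≃ₗ[ℂ] (Fin n → ℂ))) :
    Set (Submodule ℂ (Fin n → ℂ)) :=
  {P | ∃ g ∈ Sg, IsReflection g ∧ fixedSubspace g = P}

/-- The subgroup `C_P` of elements of `Sg` fixing `P` pointwise. -/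
noncomputable def pointwiseStab {n : ℕ} (Sg : Subgroup ((Fin n → ℂ) ≃ₗ[ℂ] (Fin n → ℂ)))
    (P : Submodule ℂ (Fin n → ℂ)) : Subgroup ↥Sg where
  carrier := {g | ∀ v ∈ P, (g : (Fin n → ℂ) ≃ₗ[ℂ] (Fin n → ℂ)) v = v}
  one_mem' := by
    intro v hv
    rfl
  mul_mem' := by
    intro a b ha hb v hv
    have : (↑(a * b) : (Fin n → ℂ) ≃ₗ[ℂ] (Fin n → ℂ)) v
        = (a : (Fin n → ℂ) ≃ₗ[ℂ] (Fin n → ℂ)) ((b : (Fin n → ℂ) ≃ₗ[ℂ] (Fin n → ℂ)) v) := rfl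
    rw [this, hb v hv, ha v hv]
  inv_mem' := by
    intro a ha v hv
    have h1 : (a : (Fin n → ℂ) ≃ₗ[ℂ] (Fin n → ℂ)) v = v := ha v hv
    have : (↑(a⁻¹) : (Fin n → ℂ) ≃ₗ[ℂ] (Fin n → ℂ)) v
        = ((a : (Fin n → ℂ) ≃ₗ[ℂ] (Fin n → ℂ)).symm) v := rfl
    rw [this]
    conv_lhs => rw [← h1]
    exact (a : (Fin n → ℂ) ≃ₗ[ℂ] (Fin n → ℂ)).symm_apply_apply v

/-- The number of orbits of `C_P` acting on the set `𝒮 = Sg/G` of left cosets of `G`. -/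
noncomputable def numOrbits {n : ℕ} (Sg G : Subgroup ((Fin n → ℂ) ≃ₗ[ℂ] (Fin n → ℂ)))
    (P : Submodule ℂ (Fin n → ℂ)) : ℕ :=
  Nat.card (MulAction.orbitRel.Quotient ↥(pointwiseStab Sg P) (↥Sg ⧸ G.subgroupOf Sg))

/-- `ℬ` is a `Sg`-orbit of reflecting hyperplanes of `Sg`. -/
def IsHyperplaneOrbit {n : ℕ} (Sg : Subgroup ((Fin n → ℂ) ≃ₗ[ℂ] (Fin n → ℂ)))
    (ℬ : Set (Submodule ℂ (Fin n → ℂ))) : Prop :=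
  ℬ.Nonempty ∧ ℬ ⊆ reflHyperplanes Sg ∧
  (∀ P ∈ ℬ, ∀ σ ∈ Sg, P.map (σ : (Fin n → ℂ) ≃ₗ[ℂ] (Fin n → ℂ)).toLinearMap ∈ ℬ) ∧
  ∀ P ∈ ℬ, ∀ Q ∈ ℬ, ∃ σ ∈ Sg, P.map (σ : (Fin n → ℂ) ≃ₗ[ℂ] (Fin n → ℂ)).toLinearMap = Q

/-- `b_i(P)`: the number of orbits of size `i` of `C_P = ⟨g_P⟩` acting on the set
`𝒮 = Σ/G` of left cosets. -/
noncomputable def orbitCount {n : ℕ} (Sg G : Subgroup ((Fin n → ℂ) ≃ₗ[ℂ] (Fin n → ℂ)))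
    (P : Submodule ℂ (Fin n → ℂ)) (i : ℕ) : ℕ :=
  Nat.card {ω : MulAction.orbitRel.Quotient ↥(pointwiseStab Sg P)
      (↥Sg ⧸ G.subgroupOf Sg) // Nat.card ω.orbit = i}

/-! For a reflecting hyperplane `P`, the group `C_P` consists of `1` and the reflections with
hyperplane `P`. Since `∑_{i ≥ 2} b_i (i - 1) = ℓ - #(orbits of C_P)`, Burnside's lemma turns
`|C_P|` times this sum into `∑_{g ∈ C_P, g ≠ 1} (ℓ - |Fix g|)`. Summing over `P` runs through
every reflection of `Σ` exactly once, and `∑_{g ∈ ℛ(Σ)} |Fix g| = ℓ |ℛ(G)|`: the coset `σG` is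
fixed by `g` iff `σ⁻¹ g σ ∈ G`, and conjugation by `σ` permutes the reflections. -/

open Finset MulAction

namespace MulAction

variable {H X R : Type*} [Group H] [MulAction H X] [CommRing R]

theorem sum_card_orbits_of_card_mul_sub_one [Finite X] :
    ∑ i ∈ Icc 2 (Nat.card X),
        (Nat.card {ω : orbitRel.Quotient H X // Nat.card ω.orbit = i} : R) * (i - 1) =
      Nat.card X - Nat.card (orbitRel.Quotient H X) := by
  classical
  have := Fintype.ofFinite X
  have hsize (ω : orbitRel.Quotient H X) : Nat.card ω.orbit ∈ Icc 1 (Nat.card X) :=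
    mem_Icc.2 ⟨Nat.card_pos_iff.2 ⟨ω.nonempty_orbit.to_subtype, inferInstance⟩,
      Nat.card_le_card_of_injective _ Subtype.val_injective⟩
  calc _ = ∑ i ∈ Icc 1 (Nat.card X),
        (Nat.card {ω : orbitRel.Quotient H X // Nat.card ω.orbit = i} : R) * (i - 1) := by
        refine sum_subset (Icc_subset_Icc_left one_le_two) fun i hi hi2 => ?_
        obtain rfl : i = 1 := by simp only [mem_Icc] at hi hi2; omega
        simp
    _ = ∑ ω : orbitRel.Quotient H X, ((Nat.card ω.orbit : R) - 1) := by
        rw [← sum_fiberwise_of_maps_to fun ω _ => hsize ω]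
        refine sum_congr rfl fun i _ => ?_
        rw [sum_congr rfl fun ω hω => by rw [(mem_filter.1 hω).2], sum_const, nsmul_eq_mul,
          Nat.card_eq_fintype_card, Fintype.card_subtype]
    _ = _ := by
        rw [sum_sub_distrib, ← Nat.cast_sum, sum_const, card_univ, nsmul_one,
          ← Nat.card_eq_fintype_card, ← Nat.card_sigma,
          ← Nat.card_congr (selfEquivSigmaOrbits' H X)]

theorem card_mul_card_sub_card_orbits [Fintype H] [Finite X] :
    (Nat.card H : R) * (Nat.card X - Nat.card (orbitRel.Quotient H X)) =
      ∑ h : H, ((Nat.card X : R) - Nat.card (fixedBy X h)) := by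
  classical
  have := Fintype.ofFinite X
  rw [sum_sub_distrib, sum_const, card_univ, nsmul_eq_mul]
  simp only [Nat.card_eq_fintype_card]
  rw [← Nat.cast_sum, sum_card_fixedBy_eq_card_orbits_mul_card_group]
  push_cast
  ring

end MulAction

theorem QuotientGroup.smul_coe_eq_self_iff {S : Type*} [Group S] (H : Subgroup S) (g σ : S) :
    g • (σ : S ⧸ H) = σ ↔ σ⁻¹ * g * σ ∈ H := by
  rw [MulAction.Quotient.smul_coe, QuotientGroup.eq, ← H.inv_mem_iff, smul_eq_mul]
  group

theorem Subgroup.sum_card_fixedBy_quotient_eq_index_mul {S : Type*} [Group S] [Fintype S]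
    (H : Subgroup S) {p : S → Prop} [DecidablePred p] (hp : ∀ σ g, p g → p (σ * g * σ⁻¹)) :
    ∑ g ∈ univ.filter p, Nat.card (fixedBy (S ⧸ H) g) =
      H.index * Nat.card {g : S // g ∈ H ∧ p g} := by
  classical
  have hcount (σ : S) :
      #{g ∈ univ.filter p | g • (σ : S ⧸ H) = σ} = Nat.card {g : S // g ∈ H ∧ p g} := by
    rw [filter_filter, ← Fintype.card_subtype, ← Nat.card_eq_fintype_card]
    refine Nat.card_congr (Equiv.subtypeEquiv (MulAut.conj σ⁻¹).toEquiv fun g => ?_)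
    have : p (σ⁻¹ * g * σ) → p g := fun h => by simpa [mul_assoc] using hp σ _ h
    simp only [QuotientGroup.smul_coe_eq_self_iff, MulEquiv.toEquiv_eq_coe, MulEquiv.coe_toEquiv,
      MulAut.conj_apply, inv_inv]
    exact ⟨fun h => ⟨h.2, by simpa using hp σ⁻¹ g h.1⟩, fun h => ⟨this h.2, h.1⟩⟩
  calc ∑ g ∈ univ.filter p, Nat.card (fixedBy (S ⧸ H) g)
      = ∑ g ∈ univ.filter p, #{q : S ⧸ H | g • q = q} := by
        simp only [Nat.card_eq_fintype_card, ← Fintype.card_subtype]; rfl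
    _ = ∑ q : S ⧸ H, #{g ∈ univ.filter p | g • q = q} :=
        sum_card_bipartiteAbove_eq_sum_card_bipartiteBelow _
    _ = _ := by
        rw [sum_congr rfl fun q _ => ?_, sum_const, card_univ, smul_eq_mul,
          Subgroup.index, Nat.card_eq_fintype_card]
        obtain ⟨σ, rfl⟩ := QuotientGroup.mk_surjective q
        exact hcount σ

section Reflections

variable {n : ℕ}

theorem mem_fixedSubspace {g : (Fin n → ℂ) ≃ₗ[ℂ] (Fin n → ℂ)} {v : Fin n → ℂ} :
    v ∈ fixedSubspace g ↔ g v = v := Iff.rfl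

theorem fixedSubspace_conj (σ g : (Fin n → ℂ) ≃ₗ[ℂ] (Fin n → ℂ)) :
    fixedSubspace (σ * g * σ⁻¹) = (fixedSubspace g).map σ.toLinearMap := by
  ext v
  rw [Submodule.mem_map_equiv, mem_fixedSubspace, mem_fixedSubspace]
  show σ (g (σ.symm v)) = v ↔ _
  rw [← σ.eq_symm_apply]

theorem IsReflection.conj {g : (Fin n → ℂ) ≃ₗ[ℂ] (Fin n → ℂ)} (hg : IsReflection g)
    (σ : (Fin n → ℂ) ≃ₗ[ℂ] (Fin n → ℂ)) : IsReflection (σ * g * σ⁻¹) :=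
  ⟨conj_eq_one_iff.not.2 hg.1, by rw [fixedSubspace_conj, LinearEquiv.finrank_map_eq, hg.2]⟩

theorem fixedSubspace_eq_of_le {g : (Fin n → ℂ) ≃ₗ[ℂ] (Fin n → ℂ)} (hg : g ≠ 1)
    {P : Submodule ℂ (Fin n → ℂ)} (hP : Module.finrank ℂ P = n - 1)
    (hle : P ≤ fixedSubspace g) : fixedSubspace g = P := by
  have hne : fixedSubspace g ≠ ⊤ := fun h =>
    hg <| LinearEquiv.ext fun v => mem_fixedSubspace.1 (h ▸ Submodule.mem_top)
  have hlt := Submodule.finrank_lt hne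
  rw [Module.finrank_fin_fun] at hlt
  exact (Submodule.eq_of_le_of_finrank_le hle (by omega)).symm

end Reflections

section Counting

open scoped Classical

variable {n : ℕ} (Sg G : Subgroup ((Fin n → ℂ) ≃ₗ[ℂ] (Fin n → ℂ))) [Fintype Sg]

theorem card_pointwiseStab_mul_sum_orbitCount {P : Submodule ℂ (Fin n → ℂ)}
    (hP : P ∈ reflHyperplanes Sg) :
    (Nat.card (pointwiseStab Sg P) : ℚ) *
        ∑ i ∈ Icc 2 (G.subgroupOf Sg).index, (orbitCount Sg G P i : ℚ) * (i - 1) =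
      ∑ g ∈ univ.filter (fun g : Sg => IsReflection g.1 ∧ fixedSubspace g.1 = P),
        ((G.subgroupOf Sg).index - Nat.card (fixedBy (Sg ⧸ G.subgroupOf Sg) g) : ℚ) := by
  have hPdim : Module.finrank ℂ P = n - 1 := by
    obtain ⟨h, -, hrefl, rfl⟩ := hP
    exact hrefl.2
  unfold orbitCount
  rw [Subgroup.index, sum_card_orbits_of_card_mul_sub_one, card_mul_card_sub_card_orbits]
  refine (sum_subtype (univ.filter (· ∈ pointwiseStab Sg P)) (by simp) fun g : Sg =>
    ((Nat.card (Sg ⧸ G.subgroupOf Sg) : ℚ) - Nat.card (fixedBy _ g))).symm.trans ?_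
  refine (sum_subset (fun g hg => mem_filter.2 ⟨mem_univ g, fun v hv => ?_⟩)
    fun g hg hgR => ?_).symm
  · rw [← (mem_filter.1 hg).2.2] at hv
    exact hv
  · obtain rfl : g = 1 := by
      by_contra hg1
      have hg1' : g.1 ≠ 1 := by simpa using hg1
      have heq := fixedSubspace_eq_of_le hg1' hPdim (mem_filter.1 hg).2
      exact hgR (mem_filter.2 ⟨mem_univ _, ⟨hg1', heq ▸ hPdim⟩, heq⟩)
    rw [fixedBy_one_eq_univ, Nat.card_univ, sub_self]

theorem finsum_reflHyperplanes_sum_fiber {M : Type*} [AddCommMonoid M] (f : Sg → M) :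
    ∑ᶠ P ∈ reflHyperplanes Sg,
        ∑ g ∈ univ.filter (fun g : Sg => IsReflection g.1 ∧ fixedSubspace g.1 = P), f g =
      ∑ g ∈ univ.filter (fun g : Sg => IsReflection g.1), f g := by
  let hyperplane : Sg → Submodule ℂ (Fin n → ℂ) := fun g => fixedSubspace g.1
  have himage : reflHyperplanes Sg =
      ↑((univ.filter fun g : Sg => IsReflection g.1).image hyperplane) := by
    ext P
    simp only [reflHyperplanes, hyperplane, coe_image, coe_filter, Set.mem_image,
      Set.mem_ofPred_eq, mem_univ, true_and, Subtype.exists, exists_prop]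
  rw [himage, finsum_mem_coe_finset,
    ← sum_fiberwise_of_maps_to (fun g hg => mem_image_of_mem hyperplane hg) f]
  exact sum_congr rfl fun P _ => by rw [filter_filter]

end Counting

/-- With `e(G,P) = (|C_P|/2)·Σ_{i≥2} b_i(g_P)·(i−1)`, one has
`Σ_{P∈𝒫} e(G,P) = (ℓ/2)·(|ℛ(Σ)| − |ℛ(G)|)`. -/
theorem stmt10 {n : ℕ} (Sg G : Subgroup ((Fin n → ℂ) ≃ₗ[ℂ] (Fin n → ℂ)))
    (hfin : Finite ↥Sg) (hG : G ≤ Sg) (ℓ : ℕ) (hℓ : ℓ = (G.subgroupOf Sg).index) :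
    (∑ᶠ P ∈ reflHyperplanes Sg,
        ((Nat.card ↥(pointwiseStab Sg P) : ℚ) / 2 *
          ∑ i ∈ Finset.Icc 2 ℓ, (orbitCount Sg G P i : ℚ) * ((i : ℚ) - 1))) =
      (ℓ : ℚ) / 2 *
        ((Nat.card {g : (Fin n → ℂ) ≃ₗ[ℂ] (Fin n → ℂ) // g ∈ Sg ∧ IsReflection g} : ℚ) -
          (Nat.card {g : (Fin n → ℂ) ≃ₗ[ℂ] (Fin n → ℂ) // g ∈ G ∧ IsReflection g} : ℚ)) := by
  classical
  have := Fintype.ofFinite Sg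
  subst hℓ
  have hsplit (P) (hP : P ∈ reflHyperplanes Sg) :
      (Nat.card (pointwiseStab Sg P) : ℚ) / 2 *
          ∑ i ∈ Icc 2 (G.subgroupOf Sg).index, (orbitCount Sg G P i : ℚ) * ((i : ℚ) - 1) =
        ∑ g ∈ univ.filter (fun g : Sg => IsReflection g.1 ∧ fixedSubspace g.1 = P),
          ((G.subgroupOf Sg).index - Nat.card (fixedBy (Sg ⧸ G.subgroupOf Sg) g) : ℚ) / 2 := by
    rw [div_mul_eq_mul_div, card_pointwiseStab_mul_sum_orbitCount Sg G hP, sum_div]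
  have hreflSg : Nat.card {g // g ∈ Sg ∧ IsReflection g} =
      #(univ.filter fun g : Sg => IsReflection g.1) := by
    rw [← Fintype.card_subtype, ← Nat.card_eq_fintype_card,
      ← Nat.card_congr (Equiv.subtypeSubtypeEquivSubtypeInter (· ∈ Sg) IsReflection)]
  have hreflG : Nat.card {g // g ∈ G ∧ IsReflection g} =
      Nat.card {g : Sg // g ∈ G.subgroupOf Sg ∧ IsReflection g.1} :=
    Nat.card_congr (Equiv.subtypeSubtypeEquivSubtype fun h => hG h.1).symm
  rw [finsum_mem_congr rfl hsplit, finsum_reflHyperplanes_sum_fiber, ← sum_div, sum_sub_distrib,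
    sum_const, ← Nat.cast_sum,
    Subgroup.sum_card_fixedBy_quotient_eq_index_mul _ fun σ g hg => hg.conj σ, hreflG, hreflSg]
  push_cast
  ring
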